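/- For every n ≥ 1, the number of Dyck paths of semilength n having no peak at height 2 equals catalan(n − 1); equivalently, the generating function of Dyck paths with no peak at height 2 is 1 + x·C(x). -/

import Mathlib

/-!
Cut a nonempty Dyck path at its first return, `p = (a) b`. A peak of `(a) b` at height `h + 1`
is either the peak of `(a)` with `a` empty (when `h = 0`), a peak of `a` at height `h`, or a peak
of `b` at height `h + 1`. Writing `C`, `A`, `B` for the generating functions of all Dyck paths,
of those with no peak at height 1, and of those with no peak at height 2, this gives
`C = 1 + xC²`, `A = 1 + x (xC²) A` and `B = 1 + xAB`. Eliminating `A` yields `B = 1 + xC`.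
-/

open DyckStep

/-- A Dyck word `p` has a peak at height `h`: an up-step immediately followed by a
down-step, such that the prefix ending with that up-step has `h` more `U`s than `D`s. -/
def DyckWord.HasPeakAtHeight (p : DyckWord) (h : ℕ) : Prop :=
  ∃ i, i + 1 < p.toList.length ∧ p.toList.getD i D = U ∧ p.toList.getD (i + 1) U = D ∧
    (p.toList.take (i + 1)).count U = (p.toList.take (i + 1)).count D + h

/-- Peaks of an arbitrary list of steps, located by splitting instead of by index. The height is
compared additively because prefixes of a list that is not a Dyck word may go below zero. -/
def List.HasPeakAtHeight (l : List DyckStep) (h : ℕ) : Prop :=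
  ∃ x y, l = x ++ U :: D :: y ∧ x.count U + 1 = x.count D + h

namespace List

variable {l l₁ l₂ : List DyckStep} {h : ℕ}

theorem not_hasPeakAtHeight_singleton_D : ¬ [D].HasPeakAtHeight h := by
  rintro ⟨x, y, hxy, -⟩
  rcases x with _ | ⟨s, _ | ⟨t, x⟩⟩ <;> simp at hxy

theorem hasPeakAtHeight_cons_U :
    (U :: l).HasPeakAtHeight (h + 1) ↔ (h = 0 ∧ l.head? = some D) ∨ l.HasPeakAtHeight h := by
  constructor
  · rintro ⟨_ | ⟨s, x⟩, y, hxy, hc⟩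
    · simp only [nil_append, cons.injEq, true_and] at hxy
      simp_all
    · simp only [cons_append, cons.injEq] at hxy
      obtain ⟨rfl, rfl⟩ := hxy
      exact Or.inr ⟨x, y, rfl, by simp at hc; omega⟩
  · rintro (⟨rfl, hl⟩ | ⟨x, y, rfl, hc⟩)
    · obtain ⟨y, rfl⟩ : ∃ y, l = D :: y := by
        rcases l with _ | ⟨s, y⟩ <;> simp_all
      exact ⟨[], y, rfl, rfl⟩
    · exact ⟨U :: x, y, rfl, by simp; omega⟩

theorem hasPeakAtHeight_append (hbal : l₁.count U = l₁.count D)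
    (hlast : l₁.getLast? ≠ some U) :
    (l₁ ++ l₂).HasPeakAtHeight h ↔ l₁.HasPeakAtHeight h ∨ l₂.HasPeakAtHeight h := by
  constructor
  · rintro ⟨x, y, hxy, hc⟩
    rcases append_eq_append_iff.mp hxy with ⟨z, rfl, rfl⟩ | ⟨z, rfl, hz⟩
    · exact Or.inr ⟨z, y, rfl, by simp only [count_append] at hbal hc; omega⟩
    · rcases z with _ | ⟨s, _ | ⟨t, z⟩⟩
      · exact Or.inr ⟨[], y, by simpa using hz.symm, by simp at hbal ⊢; omega⟩
      · simp only [cons_append, nil_append, cons.injEq] at hz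
        simp [← hz.1] at hlast
      · simp only [cons_append, cons.injEq] at hz
        obtain ⟨rfl, rfl, -⟩ := hz
        exact Or.inl ⟨x, z, rfl, hc⟩
  · rintro (⟨x, y, rfl, hc⟩ | ⟨x, y, rfl, hc⟩)
    · exact ⟨x, y ++ l₂, by simp, hc⟩
    · exact ⟨l₁ ++ x, y, by simp, by simp only [count_append]; omega⟩

theorem hasPeakAtHeight_iff_exists_index :
    l.HasPeakAtHeight h ↔ ∃ i, i + 1 < l.length ∧ l.getD i D = U ∧ l.getD (i + 1) U = D ∧
      (l.take (i + 1)).count U = (l.take (i + 1)).count D + h := by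
  constructor
  · rintro ⟨x, y, rfl, hc⟩
    refine ⟨x.length, by simp, by simp, ?_, ?_⟩
    · simp [getD_eq_getElem?_getD]
    · simp [take_append, take_of_length_le]; omega
  · rintro ⟨i, hi, hU, hD, hc⟩
    rw [getD_eq_getElem _ _ (by omega)] at hU
    rw [getD_eq_getElem _ _ hi] at hD
    refine ⟨l.take i, l.drop (i + 2), ?_, ?_⟩
    · rw [← hU, ← hD, ← drop_eq_getElem_cons, ← drop_eq_getElem_cons, take_append_drop]
    · rw [← take_concat_get' _ _ (by omega), hU] at hc
      simp at hc; omega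

end List

namespace DyckWord

variable {p : DyckWord} {h : ℕ}

theorem hasPeakAtHeight_iff : p.HasPeakAtHeight h ↔ p.toList.HasPeakAtHeight h :=
  List.hasPeakAtHeight_iff_exists_index.symm

theorem getLast?_toList_ne_U (p : DyckWord) : p.toList.getLast? ≠ some U := by
  rcases eq_or_ne p.toList [] with hp | hp
  · simp [hp]
  · simp [List.getLast?_eq_some_getLast hp, p.getLast_eq_D hp]

theorem hasPeakAtHeight_succ_nest_add (a b : DyckWord) :
    (a.nest + b).HasPeakAtHeight (h + 1) ↔
      (h = 0 ∧ a = 0) ∨ a.HasPeakAtHeight h ∨ b.HasPeakAtHeight (h + 1) := by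
  have hnest : a.nest.toList = U :: (a.toList ++ [D]) := rfl
  have hhead : (a.toList ++ [D]).head? = some D ↔ a = 0 := by
    cases hl : a.toList with
    | nil => simp [← toList_eq_nil, hl]
    | cons s t =>
      have hs := a.head_eq_U (by simp [hl])
      simp only [hl, List.head_cons] at hs
      simp [← toList_eq_nil, hl, hs]
  rw [hasPeakAtHeight_iff, hasPeakAtHeight_iff, hasPeakAtHeight_iff,
    show (a.nest + b).toList = a.nest.toList ++ b.toList from rfl,
    List.hasPeakAtHeight_append a.nest.count_U_eq_count_D a.nest.getLast?_toList_ne_U, hnest,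
    List.hasPeakAtHeight_cons_U, hhead,
    List.hasPeakAtHeight_append a.count_U_eq_count_D a.getLast?_toList_ne_U]
  simp [List.not_hasPeakAtHeight_singleton_D, or_assoc]

theorem HasPeakAtHeight.height_pos (hp : p.HasPeakAtHeight h) : 0 < h := by
  obtain ⟨x, y, hxy, hc⟩ := hasPeakAtHeight_iff.mp hp
  have := p.count_D_le_count_U x.length
  simp [hxy] at this
  omega

theorem not_hasPeakAtHeight_zero (h : ℕ) : ¬ (0 : DyckWord).HasPeakAtHeight h := by
  rw [hasPeakAtHeight_iff]
  rintro ⟨x, y, hxy, -⟩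
  simpa using congrArg List.length hxy

theorem semilength_eq_zero_iff : p.semilength = 0 ↔ p = 0 := by
  rw [← toList_eq_nil, ← List.length_eq_zero_iff, ← two_mul_semilength_eq_length]
  omega

theorem nest_add_inj {a b a' b' : DyckWord} : a.nest + b = a'.nest + b' ↔ a = a' ∧ b = b' := by
  refine ⟨fun h => ⟨?_, ?_⟩, fun ⟨ha, hb⟩ => ha ▸ hb ▸ rfl⟩
  · simpa [insidePart_add, insidePart_nest] using congrArg insidePart h
  · simpa [outsidePart_add, outsidePart_nest] using congrArg outsidePart h

instance (n : ℕ) (P : DyckWord → Prop) : Finite {p : DyckWord // p.semilength = n ∧ P p} :=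
  Finite.of_injective (fun p => (⟨p.1, p.2.1⟩ : {p : DyckWord // p.semilength = n}))
    fun _ _ h => Subtype.ext (congrArg Subtype.val h :)

theorem not_hasPeakAtHeight_one_nest_add (a b : DyckWord) :
    ¬ (a.nest + b).HasPeakAtHeight 1 ↔ a ≠ 0 ∧ ¬ b.HasPeakAtHeight 1 := by
  have ha : ¬ a.HasPeakAtHeight 0 := fun hp => lt_irrefl 0 hp.height_pos
  simpa [ha, not_or] using (hasPeakAtHeight_succ_nest_add (h := 0) a b).not

theorem not_hasPeakAtHeight_two_nest_add (a b : DyckWord) :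
    ¬ (a.nest + b).HasPeakAtHeight 2 ↔ ¬ a.HasPeakAtHeight 1 ∧ ¬ b.HasPeakAtHeight 2 := by
  simpa [not_or] using (hasPeakAtHeight_succ_nest_add (h := 1) a b).not

section GeneratingFunction

open PowerSeries Finset

variable {P R Q : DyckWord → Prop}

noncomputable def genFun (P : DyckWord → Prop) : PowerSeries ℤ :=
  PowerSeries.mk fun n => Nat.card {p : DyckWord // p.semilength = n ∧ P p}

noncomputable def nestAddEquiv (hP : ∀ a b, P (a.nest + b) ↔ R a ∧ Q b) (m : ℕ) :
    (Σ ij : antidiagonal m, {a : DyckWord // a.semilength = ij.1.1 ∧ R a} ×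
        {b : DyckWord // b.semilength = ij.1.2 ∧ Q b}) ≃
      {p : DyckWord // p.semilength = m + 1 ∧ P p} := by
  refine Equiv.ofBijective (fun x => ⟨x.2.1.1.nest + x.2.2.1, ?_, ?_⟩) ⟨?_, ?_⟩
  · obtain ⟨⟨⟨i, j⟩, hij⟩, ⟨a, ha, -⟩, ⟨b, hb, -⟩⟩ := x
    simp only [HasAntidiagonal.mem_antidiagonal] at hij
    simp [ha, hb, ← hij]
    omega
  · exact (hP _ _).mpr ⟨x.2.1.2.2, x.2.2.2.2⟩
  · rintro ⟨⟨⟨i, j⟩, hij⟩, ⟨a, ha, _⟩, ⟨b, hb, _⟩⟩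
      ⟨⟨⟨i', j'⟩, hij'⟩, ⟨a', ha', _⟩, ⟨b', hb', _⟩⟩ hab
    obtain ⟨rfl, rfl⟩ := nest_add_inj.mp (congrArg Subtype.val hab)
    dsimp only at ha hb ha' hb'
    subst ha hb ha' hb'
    rfl
  · rintro ⟨p, hp, hPp⟩
    have hp0 : p ≠ 0 := by rintro rfl; simp at hp
    have hsplit := nest_insidePart_add_outsidePart hp0
    have hlen := semilength_insidePart_add_semilength_outsidePart_add_one hp0
    rw [← hsplit, hP] at hPp
    exact ⟨⟨⟨(p.insidePart.semilength, p.outsidePart.semilength), by simp; omega⟩,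
      ⟨_, rfl, hPp.1⟩, ⟨_, rfl, hPp.2⟩⟩, Subtype.ext hsplit⟩

open Classical in
theorem genFun_eq_of_nest_add_iff (hP : ∀ a b, P (a.nest + b) ↔ R a ∧ Q b) :
    genFun P = (if P 0 then 1 else 0) + X * (genFun R * genFun Q) := by
  ext (_ | m)
  · simp only [genFun, coeff_mk, semilength_eq_zero_iff, map_add, coeff_zero_X_mul, add_zero]
    split_ifs with h0
    · simp only [coeff_one, if_true, Nat.cast_eq_one, Nat.card_eq_one_iff_unique]
      exact ⟨⟨fun ⟨_, hp, _⟩ ⟨_, hq, _⟩ => Subtype.ext (hp.trans hq.symm)⟩,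
        ⟨⟨0, rfl, h0⟩⟩⟩
    · have : IsEmpty {p : DyckWord // p = 0 ∧ P p} :=
        ⟨fun ⟨_, hp, hPp⟩ => h0 (hp ▸ hPp)⟩
      simp
  · rw [genFun, coeff_mk, ← Nat.card_congr (nestAddEquiv hP m), Nat.card_sigma, map_add,
      coeff_succ_X_mul, coeff_mul]
    split_ifs <;> simp [genFun, Nat.card_prod, Finset.sum_attach (antidiagonal m) fun ij =>
      (Nat.card {a : DyckWord // a.semilength = ij.1 ∧ R a} : ℤ) *
        Nat.card {b : DyckWord // b.semilength = ij.2 ∧ Q b}]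

theorem genFun_true : genFun (fun _ => True) = PowerSeries.mk fun n => (catalan n : ℤ) := by
  ext n
  simp [genFun, Nat.card_eq_fintype_card, card_dyckWord_semilength_eq_catalan]

theorem genFun_not_hasPeakAtHeight_two :
    genFun (¬ ·.HasPeakAtHeight 2) = 1 + X * genFun (fun _ => True) := by
  set C := genFun fun _ => True
  set N := genFun (· ≠ 0)
  set A := genFun (¬ ·.HasPeakAtHeight 1)
  set B := genFun (¬ ·.HasPeakAtHeight 2)
  have hC : C = 1 + X * (C * C) := by
    simpa using genFun_eq_of_nest_add_iff (P := fun _ => True) (R := fun _ => True)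
      (Q := fun _ => True) (by simp)
  have hN : N = X * (C * C) := by
    simpa using genFun_eq_of_nest_add_iff (P := (· ≠ 0)) (R := fun _ => True)
      (Q := fun _ => True) (by simp)
  have hA : A = 1 + X * (N * A) := by
    simpa [not_hasPeakAtHeight_zero] using
      genFun_eq_of_nest_add_iff (P := (¬ ·.HasPeakAtHeight 1)) (R := (· ≠ 0))
        (Q := (¬ ·.HasPeakAtHeight 1)) not_hasPeakAtHeight_one_nest_add
  have hB : B = 1 + X * (A * B) := by
    simpa [not_hasPeakAtHeight_zero] using
      genFun_eq_of_nest_add_iff (P := (¬ ·.HasPeakAtHeight 2)) (R := (¬ ·.HasPeakAtHeight 1))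
        (Q := (¬ ·.HasPeakAtHeight 2)) not_hasPeakAtHeight_two_nest_add
  linear_combination (1 + X * C) * hB + B * X * C * hA + B * X * C * X * A * hN -
    B * X * A * (1 + X * C) * hC

end GeneratingFunction

end DyckWord

theorem stmt_16_general (n : ℕ) :
    Nat.card {p : DyckWord // p.semilength = n ∧ ¬ p.HasPeakAtHeight 2} =
      catalan (n - 1) := by
  have h := congrArg (PowerSeries.coeff n) DyckWord.genFun_not_hasPeakAtHeight_two
  rw [DyckWord.genFun_true] at h
  rcases n with _ | m
  · simpa [DyckWord.genFun] using h
  · simpa [DyckWord.genFun] using h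

/-- for every `n ≥ 1`, the number of Dyck paths of semilength `n` with no
peak at height 2 equals `catalan (n − 1)`. -/
theorem stmt_16 (n : ℕ) (hn : 1 ≤ n) :
    Nat.card {p : DyckWord // p.semilength = n ∧ ¬ p.HasPeakAtHeight 2} =
      catalan (n - 1) :=
  stmt_16_general n
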